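/- Assume p > −1 and h_nn < 1, and fix 2 ≤ i ≤ n−1 with (1−h_ii)(1−h_nn) − h_in² > 0. Then A_{-{i,n}} < A_{-{n}} if and only if (h_1i h_in(1−h_nn) + h_in² h_1n)·p + (h_1i(1−h_nn) + h_in h_1n)² > 0. -/

import Mathlib

/-!
Removing a set `S` of samples moves the estimator by `θ̂₋ₛ - θ̂ = ∑_{j ∈ S} c_j N⁻¹ x_j`, where the
coefficients solve the leverage system `c_k - ∑_{j ∈ S} h_kj c_j = r_k` (`k ∈ S`). For `S = {n}` and
`S = {i, n}` this system is solved in closed form (by Cramer's rule for the `2 × 2` case), and for the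
generated labels the residuals are `r = (I - H) e`. Substituting,
`A₋{n} - A₋{i,n} = ε / ((p + 1)(1 - hₙₙ) D) · ((h₁ᵢhᵢₙ(1-hₙₙ) + hᵢₙ²h₁ₙ) p + (h₁ᵢ(1-hₙₙ) + hᵢₙh₁ₙ)²)`
with `D = (1 - hᵢᵢ)(1 - hₙₙ) - hᵢₙ² > 0`, and the prefactor is positive.
-/

open Matrix Finset

noncomputable section

/-- The Gram matrix `X₋ₛᵀ X₋ₛ` of the rows of `X` outside `S`. -/
def gramOut {n d : ℕ} (X : Matrix (Fin n) (Fin d) ℝ) (S : Finset (Fin n)) :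
    Matrix (Fin d) (Fin d) ℝ :=
  ∑ i ∈ Sᶜ, vecMulVec (X i) (X i)

/-- The leave-`S`-out OLS estimator `θ̂₋ₛ = (X₋ₛᵀX₋ₛ)⁻¹ X₋ₛᵀ y₋ₛ`. -/
def olsOut {n d : ℕ} (X : Matrix (Fin n) (Fin d) ℝ) (y : Fin n → ℝ)
    (S : Finset (Fin n)) : Fin d → ℝ :=
  (gramOut X S)⁻¹ *ᵥ (∑ i ∈ Sᶜ, y i • X i)

/-- The full OLS estimator `θ̂ = (XᵀX)⁻¹ Xᵀ y`. -/
def ols {n d : ℕ} (X : Matrix (Fin n) (Fin d) ℝ) (y : Fin n → ℝ) : Fin d → ℝ :=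
  olsOut X y ∅

/-- The actual effect `A₋ₛ = x_testᵀ (θ̂₋ₛ - θ̂)` of removing the samples in `S`. -/
def effect {n d : ℕ} (X : Matrix (Fin n) (Fin d) ℝ) (y : Fin n → ℝ)
    (xt : Fin d → ℝ) (S : Finset (Fin n)) : ℝ :=
  xt ⬝ᵥ (olsOut X y S - ols X y)

/-- The (cross-)leverage score `hᵢⱼ = xᵢᵀ N⁻¹ xⱼ` with `N = XᵀX`. -/
def lev {n d : ℕ} (X : Matrix (Fin n) (Fin d) ℝ) (i j : Fin n) : ℝ :=
  X i ⬝ᵥ ((Xᵀ * X)⁻¹ *ᵥ X j)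

/-- The negative residual `rᵢ = xᵢᵀ θ̂ - yᵢ`. -/
def resid {n d : ℕ} (X : Matrix (Fin n) (Fin d) ℝ) (y : Fin n → ℝ) (i : Fin n) : ℝ :=
  X i ⬝ᵥ ols X y - y i

/-- The generated labels `y = Xθ* - e`, `e = (ε,0,…,0,pε)ᵀ` (with the index `i₁`
playing the role of sample 1 and `iₙ` that of sample n). -/
def ygen {n d : ℕ} (X : Matrix (Fin n) (Fin d) ℝ) (θstar : Fin d → ℝ) (ε p : ℝ)
    (i₁ iₙ : Fin n) : Fin n → ℝ :=
  fun i => X i ⬝ᵥ θstar - (if i = i₁ then ε else if i = iₙ then p * ε else 0)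

/-- The test point `x_test = (x₁ + p xₙ)/(p+1)`. -/
def xtest {n d : ℕ} (X : Matrix (Fin n) (Fin d) ℝ) (p : ℝ) (i₁ iₙ : Fin n) :
    Fin d → ℝ :=
  fun j => (X i₁ j + p * X iₙ j) / (p + 1)

section Leverage

variable {n d : ℕ} (X : Matrix (Fin n) (Fin d) ℝ)

theorem gramOut_empty : gramOut X ∅ = Xᵀ * X := by
  ext a b
  simp [gramOut, mul_apply, vecMulVec_apply, Matrix.sum_apply]

theorem gramOut_mulVec (S : Finset (Fin n)) (v : Fin d → ℝ) :
    gramOut X S *ᵥ v = ∑ k ∈ Sᶜ, (X k ⬝ᵥ v) • X k := by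
  simp only [gramOut, sum_mulVec, vecMulVec_mulVec, op_smul_eq_smul]

theorem transpose_mul_self_mulVec (v : Fin d → ℝ) :
    (Xᵀ * X) *ᵥ v = ∑ k, (X k ⬝ᵥ v) • X k := by
  rw [← gramOut_empty, gramOut_mulVec, compl_empty]

theorem gramOut_mulVec_eq_sub (S : Finset (Fin n)) (v : Fin d → ℝ) :
    gramOut X S *ᵥ v = (Xᵀ * X) *ᵥ v - ∑ k ∈ S, (X k ⬝ᵥ v) • X k := by
  rw [gramOut_mulVec, transpose_mul_self_mulVec, ← sum_compl_add_sum S, add_sub_cancel_right]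

theorem lev_comm (j k : Fin n) : lev X j k = lev X k j := by
  have hsymm : ((Xᵀ * X)⁻¹)ᵀ = (Xᵀ * X)⁻¹ := by
    rw [transpose_nonsing_inv, transpose_mul, transpose_transpose]
  rw [lev, lev, dotProduct_comm, dotProduct_mulVec, ← mulVec_transpose, hsymm]

variable (y : Fin n → ℝ) (xt : Fin d → ℝ)

theorem transpose_mul_self_mulVec_ols (hN : IsUnit (Xᵀ * X).det) :
    (Xᵀ * X) *ᵥ ols X y = ∑ i, y i • X i := by
  rw [ols, olsOut, gramOut_empty, mulVec_mulVec, mul_nonsing_inv _ hN, one_mulVec, compl_empty]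

theorem sum_compl_smul_eq_gramOut_mulVec_ols_add (hN : IsUnit (Xᵀ * X).det)
    (S : Finset (Fin n)) :
    ∑ i ∈ Sᶜ, y i • X i = gramOut X S *ᵥ ols X y + ∑ k ∈ S, resid X y k • X k := by
  rw [gramOut_mulVec_eq_sub, transpose_mul_self_mulVec_ols X y hN, ← sum_compl_add_sum S]
  simp only [resid, sub_smul, sum_sub_distrib]
  abel

theorem olsOut_sub_ols (hN : IsUnit (Xᵀ * X).det) {S : Finset (Fin n)}
    (hS : IsUnit (gramOut X S).det) {w : Fin d → ℝ}
    (hw : gramOut X S *ᵥ w = ∑ k ∈ S, resid X y k • X k) :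
    olsOut X y S - ols X y = w := by
  rw [olsOut, sum_compl_smul_eq_gramOut_mulVec_ols_add X y hN, ← hw, ← mulVec_add, mulVec_mulVec,
    nonsing_inv_mul _ hS, one_mulVec, add_sub_cancel_left]

theorem effect_eq_of_leverage_system (hN : IsUnit (Xᵀ * X).det) {S : Finset (Fin n)}
    (hS : IsUnit (gramOut X S).det) (c : Fin n → ℝ)
    (hc : ∀ k ∈ S, c k - ∑ j ∈ S, lev X k j * c j = resid X y k) :
    effect X y xt S = ∑ j ∈ S, c j * (xt ⬝ᵥ (Xᵀ * X)⁻¹ *ᵥ X j) := by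
  set w := ∑ j ∈ S, c j • (Xᵀ * X)⁻¹ *ᵥ X j
  have hNw : (Xᵀ * X) *ᵥ w = ∑ j ∈ S, c j • X j := by
    simp only [w, mulVec_sum, mulVec_smul, mulVec_mulVec, mul_nonsing_inv _ hN, one_mulVec]
  have hw : gramOut X S *ᵥ w = ∑ k ∈ S, resid X y k • X k := by
    rw [gramOut_mulVec_eq_sub, hNw, ← sum_sub_distrib]
    refine sum_congr rfl fun k hk => ?_
    simp only [← hc k hk, sub_smul, w, dotProduct_sum, dotProduct_smul, smul_eq_mul, lev, mul_comm]
  rw [effect, olsOut_sub_ols X y hN hS hw, dotProduct_sum]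
  simp only [dotProduct_smul, smul_eq_mul]

theorem effect_singleton (hN : IsUnit (Xᵀ * X).det) {k : Fin n}
    (hk : IsUnit (gramOut X {k}).det) (hkk : lev X k k ≠ 1) :
    effect X y xt {k} = resid X y k / (1 - lev X k k) * (xt ⬝ᵥ (Xᵀ * X)⁻¹ *ᵥ X k) := by
  have hkk' : 1 - lev X k k ≠ 0 := sub_ne_zero.mpr hkk.symm
  rw [effect_eq_of_leverage_system X y xt hN hk fun _ => resid X y k / (1 - lev X k k),
    sum_singleton]
  intro j hj
  rw [mem_singleton.mp hj, sum_singleton]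
  field_simp

theorem effect_pair (hN : IsUnit (Xᵀ * X).det) {k l : Fin n} (hkl : k ≠ l)
    (hS : IsUnit (gramOut X {k, l}).det)
    (hD : (1 - lev X k k) * (1 - lev X l l) - lev X k l ^ 2 ≠ 0) :
    effect X y xt {k, l} =
      ((1 - lev X l l) * resid X y k + lev X k l * resid X y l) /
          ((1 - lev X k k) * (1 - lev X l l) - lev X k l ^ 2) * (xt ⬝ᵥ (Xᵀ * X)⁻¹ *ᵥ X k) +
        (lev X k l * resid X y k + (1 - lev X k k) * resid X y l) /
          ((1 - lev X k k) * (1 - lev X l l) - lev X k l ^ 2) * (xt ⬝ᵥ (Xᵀ * X)⁻¹ *ᵥ X l) := by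
  rw [effect_eq_of_leverage_system X y xt hN hS fun j => if j = k then
      ((1 - lev X l l) * resid X y k + lev X k l * resid X y l) /
        ((1 - lev X k k) * (1 - lev X l l) - lev X k l ^ 2)
    else (lev X k l * resid X y k + (1 - lev X k k) * resid X y l) /
        ((1 - lev X k k) * (1 - lev X l l) - lev X k l ^ 2),
    sum_pair hkl, if_pos rfl, if_neg hkl.symm]
  intro j hj
  rw [sum_pair hkl, if_pos rfl, if_neg hkl.symm]
  set D := (1 - lev X k k) * (1 - lev X l l) - lev X k l ^ 2 with hD_def
  rcases mem_insert.mp hj with rfl | hj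
  · rw [if_pos rfl]
    field_simp
    rw [hD_def]
    ring
  · rw [mem_singleton.mp hj, if_neg hkl.symm, lev_comm X l k]
    field_simp
    rw [hD_def]
    ring

theorem resid_dotProduct_sub (hN : IsUnit (Xᵀ * X).det) (θ : Fin d → ℝ) (e : Fin n → ℝ)
    (k : Fin n) :
    resid X (fun j => X j ⬝ᵥ θ - e j) k = e k - ∑ j, lev X k j * e j := by
  have hols : ols X (fun j => X j ⬝ᵥ θ - e j) = θ - (Xᵀ * X)⁻¹ *ᵥ ∑ j, e j • X j := by
    simp only [ols, olsOut, gramOut_empty, compl_empty, sub_smul, sum_sub_distrib]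
    rw [← transpose_mul_self_mulVec, mulVec_sub, mulVec_mulVec, nonsing_inv_mul _ hN, one_mulVec]
  simp only [resid, hols, dotProduct_sub, mulVec_sum, mulVec_smul, dotProduct_sum, dotProduct_smul,
    smul_eq_mul, lev, mul_comm]
  ring

theorem resid_ygen (hN : IsUnit (Xᵀ * X).det) (θstar : Fin d → ℝ) (ε p : ℝ) {i₁ iₙ : Fin n}
    (h1n : i₁ ≠ iₙ) (k : Fin n) :
    resid X (ygen X θstar ε p i₁ iₙ) k =
      (if k = i₁ then ε else if k = iₙ then p * ε else 0) -
        (ε * lev X k i₁ + p * ε * lev X k iₙ) := by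
  unfold ygen
  rw [resid_dotProduct_sub X hN, sum_eq_add_of_mem i₁ iₙ (mem_univ _) (mem_univ _) h1n
    fun j _ hj => by simp [hj.1, hj.2]]
  simp [h1n.symm, mul_comm]

theorem xtest_dotProduct (p : ℝ) (i₁ iₙ : Fin n) (v : Fin d → ℝ) :
    xtest X p i₁ iₙ ⬝ᵥ v = (X i₁ ⬝ᵥ v + p * (X iₙ ⬝ᵥ v)) / (p + 1) := by
  simp only [xtest, dotProduct, div_mul_eq_mul_div, ← sum_div, add_mul, sum_add_distrib, mul_sum,
    mul_assoc]

end Leverage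

theorem cancellation_condition_middle_iff_general
    (n d : ℕ) (hn : 3 ≤ n)
    (X : Matrix (Fin n) (Fin d) ℝ) (θstar : Fin d → ℝ) (ε : ℝ) (hε : 0 < ε)
    (p : ℝ) (hp : -1 < p)
    (i₁ iₙ : Fin n) (hi₁ : (i₁ : ℕ) = 0) (hiₙ : (iₙ : ℕ) = n - 1)
    (hN : IsUnit (Xᵀ * X).det)
    (houtₙ : IsUnit (gramOut X {iₙ}).det)
    (i : Fin n) (hii₁ : i ≠ i₁) (hiiₙ : i ≠ iₙ)
    (houtᵢₙ : IsUnit (gramOut X {i, iₙ}).det)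
    (hnn : lev X iₙ iₙ < 1)
    (hD : 0 < (1 - lev X i i) * (1 - lev X iₙ iₙ) - (lev X i iₙ) ^ 2) :
    effect X (ygen X θstar ε p i₁ iₙ) (xtest X p i₁ iₙ) {i, iₙ} <
      effect X (ygen X θstar ε p i₁ iₙ) (xtest X p i₁ iₙ) {iₙ} ↔
    0 < (lev X i₁ i * lev X i iₙ * (1 - lev X iₙ iₙ) +
        (lev X i iₙ) ^ 2 * lev X i₁ iₙ) * p +
      (lev X i₁ i * (1 - lev X iₙ iₙ) + lev X i iₙ * lev X i₁ iₙ) ^ 2 := by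
  have h1n : i₁ ≠ iₙ := fun h => by rw [h] at hi₁; omega
  have hxt (j : Fin n) : xtest X p i₁ iₙ ⬝ᵥ (Xᵀ * X)⁻¹ *ᵥ X j =
      (lev X i₁ j + p * lev X iₙ j) / (p + 1) :=
    xtest_dotProduct X p i₁ iₙ _
  rw [← sub_pos, effect_singleton X _ _ hN houtₙ hnn.ne, effect_pair X _ _ hN hiiₙ houtᵢₙ hD.ne',
    hxt, hxt, resid_ygen X hN θstar ε p h1n, resid_ygen X hN θstar ε p h1n, if_neg hii₁,
    if_neg hiiₙ, if_neg h1n.symm, if_pos rfl, lev_comm X i i₁, lev_comm X iₙ i₁, lev_comm X iₙ i]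
  set t := lev X iₙ iₙ
  have ht : 0 < 1 - t := by linarith
  have hp1 : 0 < p + 1 := by linarith
  set D := (1 - lev X i i) * (1 - t) - lev X i iₙ ^ 2 with hD_def
  conv_rhs => rw [← mul_pos_iff_of_pos_left (by positivity : 0 < ε / ((p + 1) * (1 - t) * D))]
  apply iff_of_eq
  congr 1
  field_simp
  rw [hD_def]
  ring

/-- Lemma B.3: assuming `p > -1`, `hₙₙ < 1`, and for a fixed middle
index `i` with `(1-hᵢᵢ)(1-hₙₙ) - hᵢₙ² > 0`, we have `A₋{i,n} < A₋{n}` if and only if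
`(h₁ᵢhᵢₙ(1-hₙₙ) + hᵢₙ²h₁ₙ)·p + (h₁ᵢ(1-hₙₙ) + hᵢₙh₁ₙ)² > 0`. -/
theorem cancellation_condition_middle_iff
    (n d : ℕ) (hn : 3 ≤ n) (hd : 0 < d)
    (X : Matrix (Fin n) (Fin d) ℝ) (θstar : Fin d → ℝ) (ε : ℝ) (hε : 0 < ε)
    (p : ℝ) (hp : -1 < p)
    (i₁ iₙ : Fin n) (hi₁ : (i₁ : ℕ) = 0) (hiₙ : (iₙ : ℕ) = n - 1)
    (hone : ∀ i, X i ⟨0, hd⟩ = 1)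
    (hN : IsUnit (Xᵀ * X).det)
    (hmid : IsUnit (∑ i ∈ ({i₁, iₙ} : Finset (Fin n))ᶜ, vecMulVec (X i) (X i)).det)
    (houtₙ : IsUnit (gramOut X {iₙ}).det)
    (i : Fin n) (hii₁ : i ≠ i₁) (hiiₙ : i ≠ iₙ)
    (houtᵢₙ : IsUnit (gramOut X {i, iₙ}).det)
    (hnn : lev X iₙ iₙ < 1)
    (hD : 0 < (1 - lev X i i) * (1 - lev X iₙ iₙ) - (lev X i iₙ) ^ 2) :
    effect X (ygen X θstar ε p i₁ iₙ) (xtest X p i₁ iₙ) {i, iₙ} <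
      effect X (ygen X θstar ε p i₁ iₙ) (xtest X p i₁ iₙ) {iₙ} ↔
    0 < (lev X i₁ i * lev X i iₙ * (1 - lev X iₙ iₙ) +
        (lev X i iₙ) ^ 2 * lev X i₁ iₙ) * p +
      (lev X i₁ i * (1 - lev X iₙ iₙ) + lev X i iₙ * lev X i₁ iₙ) ^ 2 :=
  cancellation_condition_middle_iff_general n d hn X θstar ε hε p hp i₁ iₙ hi₁ hiₙ hN houtₙ i hii₁
    hiiₙ houtᵢₙ hnn hD
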